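/- arXiv:1505.02693 — 5 statements merged into one kernel-verified Lean document; each statement's English description precedes it below -/
import Mathlib

section
/- Let D < 0 be a fundamental discriminant, k = ℚ(√D) the imaginary quadratic field of discriminant D, and let 𝔞 be a nonzero fractional ideal of k with ℤ-basis {α, β}. Then the three rational numbers a = N(α)/N(𝔞), b = Tr_{k/ℚ}(α·β̄)/N(𝔞), c = N(β)/N(𝔞) are integers, and they satisfy b² − 4ac = D. (In other words, Q_𝔞(x,y) = N(xα + yβ)/N(𝔞) is an integral binary quadratic form of discriminant D.) -/
/-!
The extension `k/ℚ` is Galois with group `{1, σ}`, so `N x = x σx` and `Tr x = x + σx`. Hence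
`Tr(α σβ) = N α + N β - N(α - β)` and the discriminant of the pair `(α, β)` is
`Tr(α σβ)² - 4 N α N β`. Every `x ∈ 𝔞` generates `𝔞 𝔟` with `𝔟` integral, so `N(𝔞)` divides
`N x`, which makes `a`, `b`, `c` integers. Since `(α, β)` is a `ℤ`-basis of `𝔞`, its discriminant
is `N(𝔞)² disc k = N(𝔞)² D`.
-/

open NumberField Module
open scoped nonZeroDivisors

namespace Algebra.IsQuadraticExtension

variable {F K : Type*} [Field F] [Field K] [Algebra F K] [IsQuadraticExtension F K]
  [Algebra.IsSeparable F K]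

theorem apply_apply (σ : Gal(K/F)) (x : K) : σ (σ x) = x := by
  have hσ : σ ^ 2 = 1 := by
    rw [← IsQuadraticExtension.finrank_eq_two F K, ← IsGalois.card_aut_eq_finrank F K]
    exact pow_card_eq_one'
  exact DFunLike.congr_fun hσ x

open Classical in
theorem univ_eq_pair {σ : Gal(K/F)} (hσ : σ ≠ 1) : (Finset.univ : Finset Gal(K/F)) = {1, σ} := by
  refine (Finset.eq_univ_of_card _ ?_).symm
  rw [Finset.card_pair hσ.symm, Fintype.card_eq_nat_card, IsGalois.card_aut_eq_finrank,
    IsQuadraticExtension.finrank_eq_two]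

theorem algebraMap_trace_eq_add {σ : Gal(K/F)} (hσ : σ ≠ 1) (x : K) :
    algebraMap F K (trace F K x) = x + σ x := by
  classical
  rw [trace_eq_sum_automorphisms, univ_eq_pair hσ, Finset.sum_pair hσ.symm]
  rfl

theorem algebraMap_norm_eq_mul {σ : Gal(K/F)} (hσ : σ ≠ 1) (x : K) :
    algebraMap F K (Algebra.norm F x) = x * σ x := by
  classical
  rw [norm_eq_prod_automorphisms, univ_eq_pair hσ, Finset.prod_pair hσ.symm]
  rfl

theorem trace_mul_apply_eq_norm_add_norm_sub_norm {σ : Gal(K/F)} (hσ : σ ≠ 1) (x y : K) :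
    trace F K (x * σ y) = Algebra.norm F x + Algebra.norm F y - Algebra.norm F (x - y) := by
  apply (algebraMap F K).injective
  simp only [map_sub, map_add, map_mul, algebraMap_trace_eq_add hσ, algebraMap_norm_eq_mul hσ,
    apply_apply]
  ring

theorem discr_pair {σ : Gal(K/F)} (hσ : σ ≠ 1) (x y : K) :
    discr F ![x, y] = trace F K (x * σ y) ^ 2 - 4 * Algebra.norm F x * Algebra.norm F y := by
  apply (algebraMap F K).injective
  rw [discr_def, Matrix.det_fin_two]
  simp only [traceMatrix_apply, traceForm_apply, Matrix.cons_val_zero, Matrix.cons_val_one,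
    map_sub, map_mul, map_pow, map_ofNat, algebraMap_trace_eq_add hσ, algebraMap_norm_eq_mul hσ,
    apply_apply]
  ring

end Algebra.IsQuadraticExtension

theorem Algebra.discr_eq_det_sq_mul_discr {A B ι : Type*} [CommRing A] [CommRing B] [Algebra A B]
    [Fintype ι] [DecidableEq ι] (b : Basis ι A B) (v : ι → B) :
    discr A v = b.det v ^ 2 * discr A b := by
  conv_lhs => rw [← b.toMatrix_map_vecMul v]
  rw [discr_of_matrix_vecMul, Basis.det_apply]

namespace FractionalIdeal

variable {K : Type*} [Field K] [NumberField K]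

theorem discr_basis_eq_absNorm_sq_mul_discr {ι : Type*} [Fintype ι] [DecidableEq ι]
    {I : FractionalIdeal (𝓞 K)⁰ K} (hI : I ≠ 0) (bI : Basis ι ℤ I) :
    Algebra.discr ℚ (((↑) : ↥(I : Submodule (𝓞 K) K) → K) ∘ bI) = absNorm I ^ 2 * discr K := by
  have hcard : Fintype.card (Free.ChooseBasisIndex ℤ (𝓞 K)) = Fintype.card ι := by
    have hrank := fractionalIdeal_rank K (Units.mk0 I hI)
    rw [Units.val_mk0] at hrank
    rw [← finrank_eq_card_basis bI, hrank, finrank_eq_card_chooseBasisIndex]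
  let b := (RingOfIntegers.basis K).reindex (Fintype.equivOfCardEq hcard)
  rw [Algebra.discr_eq_det_sq_mul_discr (b.localizationLocalization ℚ ℤ⁰ K), ← sq_abs,
    abs_det_basis_change b I bI, Algebra.discr_localizationLocalization, discr_eq_discr]
  rfl

theorem exists_intCast_mul_absNorm_eq_norm_of_mem {I : FractionalIdeal (𝓞 K)⁰ K} (hI : I ≠ 0)
    {x : K} (hx : x ∈ I) : ∃ m : ℤ, (m : ℚ) * absNorm I = Algebra.norm ℚ x := by
  have hle : I⁻¹ * spanSingleton (𝓞 K)⁰ x ≤ 1 := by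
    calc I⁻¹ * spanSingleton (𝓞 K)⁰ x ≤ I⁻¹ * I := by gcongr; exact spanSingleton_le_iff_mem.mpr hx
      _ = 1 := inv_mul_cancel₀ hI
  obtain ⟨J, hJ⟩ := le_one_iff_exists_coeIdeal.mp hle
  have hspan : spanSingleton (𝓞 K)⁰ x = I * J := by
    rw [hJ, ← mul_assoc, mul_inv_cancel₀ hI, one_mul]
  have habs : |Algebra.norm ℚ x| = absNorm I * Ideal.absNorm J := by
    rw [← absNorm_span_singleton (R := 𝓞 K), hspan, map_mul, coeIdeal_absNorm]
  rcases abs_choice (Algebra.norm ℚ x) with h | h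
  · exact ⟨Ideal.absNorm J, by rw [← h, habs]; push_cast; ring⟩
  · exact ⟨-Ideal.absNorm J, by rw [← neg_eq_iff_eq_neg.mpr h, habs]; push_cast; ring⟩

theorem discr_eq_absNorm_sq_mul_discr_of_mem_iff_mem_span {ι : Type*} [Fintype ι] [DecidableEq ι]
    {I : FractionalIdeal (𝓞 K)⁰ K} (hI : I ≠ 0) {v : ι → K}
    (hv : ∀ x, x ∈ I ↔ x ∈ Submodule.span ℤ (Set.range v))
    (hcard : Fintype.card ι = finrank ℚ K) :
    Algebra.discr ℚ v = absNorm I ^ 2 * discr K := by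
  let w : ι → (I : Submodule (𝓞 K) K) := fun i ↦ ⟨v i, (hv _).2 (Submodule.subset_span ⟨i, rfl⟩)⟩
  have hspan : ⊤ ≤ Submodule.span ℤ (Set.range w) := by
    rintro ⟨x, hx⟩ -
    have hx' : x ∈ (Submodule.span ℤ (Set.range w)).map
        ((I : Submodule (𝓞 K) K).subtype.restrictScalars ℤ) := by
      rw [Submodule.map_span, ← Set.range_comp]
      exact (hv x).1 hx
    obtain ⟨y, hy, rfl⟩ := hx'
    exact hy
  have hrank : Fintype.card ι = finrank ℤ I := by
    have hrank := fractionalIdeal_rank K (Units.mk0 I hI)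
    rw [Units.val_mk0] at hrank
    rw [hrank, RingOfIntegers.rank, hcard]
  have hdiscr :=
    discr_basis_eq_absNorm_sq_mul_discr hI (basisOfTopLeSpanOfCardEqFinrank w hspan hrank)
  rwa [coe_basisOfTopLeSpanOfCardEqFinrank] at hdiscr

end FractionalIdeal

theorem integral_binary_quadratic_form_of_fractional_ideal_general
    (D : ℤ)
    (k : Type) [Field k] [NumberField k]
    (hdeg : Module.finrank ℚ k = 2) (hdisc : NumberField.discr k = D)
    (σ : k ≃ₐ[ℚ] k) (hσ : σ ≠ AlgEquiv.refl)
    (𝔞 : FractionalIdeal (𝓞 k)⁰ k) (h𝔞 : 𝔞 ≠ 0)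
    (α β : k)
    (hbasis : ∀ x : k, x ∈ 𝔞 ↔ ∃ m n : ℤ, x = m • α + n • β) :
    ∃ a b c : ℤ,
      (a : ℚ) = Algebra.norm ℚ α / FractionalIdeal.absNorm 𝔞 ∧
      (b : ℚ) = Algebra.trace ℚ k (α * σ β) / FractionalIdeal.absNorm 𝔞 ∧
      (c : ℚ) = Algebra.norm ℚ β / FractionalIdeal.absNorm 𝔞 ∧
      b ^ 2 - 4 * a * c = D := by
  have : Algebra.IsQuadraticExtension ℚ k := ⟨hdeg⟩
  have hN : FractionalIdeal.absNorm 𝔞 ≠ 0 := FractionalIdeal.absNorm_eq_zero_iff.not.mpr h𝔞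
  obtain ⟨a, ha⟩ := FractionalIdeal.exists_intCast_mul_absNorm_eq_norm_of_mem h𝔞
    ((hbasis α).mpr ⟨1, 0, by simp⟩)
  obtain ⟨c, hc⟩ := FractionalIdeal.exists_intCast_mul_absNorm_eq_norm_of_mem h𝔞
    ((hbasis β).mpr ⟨0, 1, by simp⟩)
  obtain ⟨e, he⟩ := FractionalIdeal.exists_intCast_mul_absNorm_eq_norm_of_mem h𝔞
    ((hbasis (α - β)).mpr ⟨1, -1, by simp [sub_eq_add_neg]⟩)
  have hb : ((a + c - e : ℤ) : ℚ) * FractionalIdeal.absNorm 𝔞 = Algebra.trace ℚ k (α * σ β) := by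
    rw [Algebra.IsQuadraticExtension.trace_mul_apply_eq_norm_add_norm_sub_norm hσ, ← ha, ← hc,
      ← he]
    push_cast
    ring
  have hspan : ∀ x, x ∈ 𝔞 ↔ x ∈ Submodule.span ℤ (Set.range ![α, β]) := by
    intro x
    simp only [hbasis, Matrix.range_cons_cons_empty, Submodule.mem_span_pair, eq_comm]
  have hdiscr := FractionalIdeal.discr_eq_absNorm_sq_mul_discr_of_mem_iff_mem_span h𝔞 hspan
    (by simp [hdeg])
  rw [Algebra.IsQuadraticExtension.discr_pair hσ, hdisc, ← ha, ← hb, ← hc] at hdiscr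
  refine ⟨a, a + c - e, c, ?_, ?_, ?_, ?_⟩
  · rw [← ha, mul_div_cancel_right₀ _ hN]
  · rw [← hb, mul_div_cancel_right₀ _ hN]
  · rw [← hc, mul_div_cancel_right₀ _ hN]
  · have h : (((a + c - e) ^ 2 - 4 * a * c : ℤ) : ℚ) * FractionalIdeal.absNorm 𝔞 ^ 2 =
        D * FractionalIdeal.absNorm 𝔞 ^ 2 := by
      push_cast at hdiscr ⊢
      linear_combination hdiscr
    exact_mod_cast mul_right_cancel₀ (pow_ne_zero 2 hN) h

/-- Let `D < 0` be a fundamental discriminant, `k = ℚ(√D)` the imaginary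
quadratic field of discriminant `D` (so `k` is a number field of degree 2 over `ℚ` with
discriminant `D`), and let `𝔞` be a nonzero fractional ideal of `k` with ℤ-basis `{α, β}`.
Here `σ` is the nontrivial ℚ-automorphism of `k`, so `σ β = β̄`.  Then the three rational
numbers `a = N(α)/N(𝔞)`, `b = Tr(α·β̄)/N(𝔞)`, `c = N(β)/N(𝔞)` are integers satisfying
`b² − 4ac = D`. -/
theorem integral_binary_quadratic_form_of_fractional_ideal
    (D : ℤ) (hDneg : D < 0)
    (k : Type) [Field k] [NumberField k]
    (hdeg : Module.finrank ℚ k = 2) (hdisc : NumberField.discr k = D)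
    (σ : k ≃ₐ[ℚ] k) (hσ : σ ≠ AlgEquiv.refl)
    (𝔞 : FractionalIdeal (𝓞 k)⁰ k) (h𝔞 : 𝔞 ≠ 0)
    (α β : k)
    (hbasis : ∀ x : k, x ∈ 𝔞 ↔ ∃ m n : ℤ, x = m • α + n • β) :
    ∃ a b c : ℤ,
      (a : ℚ) = Algebra.norm ℚ α / FractionalIdeal.absNorm 𝔞 ∧
      (b : ℚ) = Algebra.trace ℚ k (α * σ β) / FractionalIdeal.absNorm 𝔞 ∧
      (c : ℚ) = Algebra.norm ℚ β / FractionalIdeal.absNorm 𝔞 ∧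
      b ^ 2 - 4 * a * c = D :=
  integral_binary_quadratic_form_of_fractional_ideal_general D k hdeg hdisc σ hσ 𝔞 h𝔞 α β hbasis
end

section
/- Let D < 0 be a fundamental discriminant, k = ℚ(√D), and 𝔞 a nonzero fractional ideal of k. For every τ in the complex upper half-plane ℍ, the family (e(N(a)τ/N(𝔞)))_{a ∈ 𝔞} is summable, and the resulting function θ_𝔞 : ℍ → ℂ, θ_𝔞(τ) = Σ_{a ∈ 𝔞} e(N(a)τ/N(𝔞)), is holomorphic on ℍ. -/
open NumberField
open scoped nonZeroDivisors

/-- The theta function of a fractional ideal `𝔞` of an imaginary quadratic field: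
`θ_𝔞(τ) = Σ_{a ∈ 𝔞} e(N(a)τ/N(𝔞))`, where `e(z) = exp(2πiz)`. -/
noncomputable def idealTheta (k : Type) [Field k] [NumberField k]
    (𝔞 : FractionalIdeal (𝓞 k)⁰ k) (τ : ℂ) : ℂ :=
  ∑' a : (𝔞 : Submodule (𝓞 k) k),
    Complex.exp (2 * Real.pi * Complex.I *
      ((Algebra.norm ℚ (a : k) / FractionalIdeal.absNorm 𝔞 : ℚ) : ℂ) * τ)

/-!
For `[k : ℚ] = 2` and `D < 0` the field `k` has a single infinite place `w`, and it is complex, so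
`N(a) = w(a)² = ‖a‖²` for the Minkowski embedding of `k`. Hence `|e(N(a)τ/N(𝔞))|` is the Gaussian
`exp(-2π Im τ ‖a‖² / N(𝔞))` on the lattice image of `𝔞`, which is dominated by the summable
`‖a‖^(-2m)` once `2m > 2`. These bounds decrease as `Im τ` grows, so the series converges locally
uniformly on `ℍ` and its sum is holomorphic.
-/

theorem Real.exp_neg_mul_sq_le {c t : ℝ} (hc : 0 < c) (ht : 0 < t) (m : ℕ) :
    Real.exp (-c * t ^ 2) ≤ m.factorial / c ^ m * t⁻¹ ^ (2 * m) :=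
  calc Real.exp (-c * t ^ 2) = (Real.exp (c * t ^ 2))⁻¹ := by rw [neg_mul, Real.exp_neg]
    _ ≤ ((c * t ^ 2) ^ m / m.factorial)⁻¹ :=
      inv_anti₀ (by positivity) (Real.pow_div_factorial_le_exp _ (by positivity) m)
    _ = m.factorial / c ^ m * t⁻¹ ^ (2 * m) := by rw [inv_pow, pow_mul]; field_simp; ring

theorem ZLattice.summable_exp_neg_mul_norm_sq {E : Type*} [NormedAddCommGroup E]
    [NormedSpace ℝ E] [FiniteDimensional ℝ E] (L : Submodule ℤ E) [DiscreteTopology L]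
    {c : ℝ} (hc : 0 < c) : Summable fun z : L => Real.exp (-c * ‖z‖ ^ 2) := by
  set m := Module.finrank ℤ L + 1
  refine Summable.of_norm_bounded_eventually
    ((ZLattice.summable_norm_pow_inv L (2 * m) (by omega)).mul_left (m.factorial / c ^ m))
    ((Filter.eventually_cofinite_ne 0).mono fun z hz => ?_)
  rw [Real.norm_of_nonneg (Real.exp_pos _).le]
  exact Real.exp_neg_mul_sq_le hc (norm_pos_iff.mpr hz) m

section ExponentialSeries

open Complex Real

variable {ι : Type*} {r : ι → ℝ}

theorem Complex.norm_exp_two_pi_I_mul_ofReal_mul (x : ℝ) (τ : ℂ) :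
    ‖cexp (2 * π * I * x * τ)‖ = rexp (-(2 * π * τ.im) * x) := by
  rw [Complex.norm_exp]
  congr 1
  simp only [mul_re, mul_im, ofReal_re, ofReal_im, I_re, I_im, re_ofNat, im_ofNat]
  ring

theorem summable_cexp_two_pi_I_mul_of_summable_exp_neg_mul
    (hr : ∀ c > 0, Summable fun i => rexp (-c * r i)) {τ : ℂ} (hτ : 0 < τ.im) :
    Summable fun i => cexp (2 * π * I * r i * τ) :=
  .of_norm (by simpa only [norm_exp_two_pi_I_mul_ofReal_mul] using hr _ (by positivity))

theorem differentiableOn_tsum_cexp_two_pi_I_mul (hr₀ : ∀ i, 0 ≤ r i)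
    (hr : ∀ c > 0, Summable fun i => rexp (-c * r i)) :
    DifferentiableOn ℂ (fun τ => ∑' i, cexp (2 * π * I * r i * τ)) {τ | 0 < τ.im} := by
  intro τ₀ (hτ₀ : 0 < τ₀.im)
  set t := τ₀.im / 2
  have ht : 0 < t := half_pos hτ₀
  have hU : IsOpen {τ : ℂ | t < τ.im} := isOpen_lt continuous_const continuous_im
  have hdiff : DifferentiableOn ℂ (fun τ => ∑' i, cexp (2 * π * I * r i * τ)) {τ | t < τ.im} :=
    differentiableOn_tsum_of_summable_norm (hr (2 * π * t) (by positivity))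
      (fun i => ((differentiable_id.const_mul _).cexp).differentiableOn) hU
      fun i τ (hτ : t < τ.im) => by
        rw [norm_exp_two_pi_I_mul_ofReal_mul, Real.exp_le_exp, neg_mul, neg_mul, neg_le_neg_iff]
        gcongr
        exact hr₀ i
  exact (hdiff.differentiableAt (hU.mem_nhds (half_lt_self hτ₀))).differentiableWithinAt

end ExponentialSeries

namespace NumberField

open InfinitePlace ComplexEmbedding

theorem IsTotallyComplex.norm_nonneg {K : Type*} [Field K] [NumberField K]
    [IsTotallyComplex K] (x : K) : 0 ≤ Algebra.norm ℚ x := by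
  classical
  have hfiber (w : InfinitePlace K) :
      ({φ | InfinitePlace.mk φ = w} : Finset (K →+* ℂ)) = {w.embedding, conjugate w.embedding} := by
    ext φ
    rw [Finset.mem_filter, ← mk_embedding w, mk_eq_iff, mk_embedding]
    simp [ComplexEmbedding.conjugate, star_involutive.eq_iff]
  have hprod : ((Algebra.norm ℚ x : ℚ) : ℝ) = ∏ w : InfinitePlace K,
      Complex.normSq (w.embedding x) := by
    apply Complex.ofReal_injective
    rw [Complex.ofReal_ratCast, ← eq_ratCast (algebraMap ℚ ℂ),
      Algebra.norm_eq_prod_embeddings ℚ ℂ, Complex.ofReal_prod,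
      ← Fintype.prod_equiv (RingHom.equivRatAlgHom K ℂ) (fun φ => φ x) _ fun _ => rfl,
      ← Finset.prod_fiberwise Finset.univ InfinitePlace.mk]
    refine Finset.prod_congr rfl fun w _ => ?_
    rw [hfiber, Finset.prod_pair, conjugate_coe_eq, Complex.mul_conj]
    exact fun h => IsTotallyComplex.complexEmbedding_not_isReal w.embedding h.symm
  exact_mod_cast hprod ▸ Finset.prod_nonneg fun w _ => Complex.normSq_nonneg _

theorem isTotallyComplex_of_finrank_eq_two_of_discr_neg {K : Type*} [Field K]
    [NumberField K] (hdeg : Module.finrank ℚ K = 2) (hD : discr K < 0) : IsTotallyComplex K := by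
  have hsign := sign_discr K
  have hrank := card_add_two_mul_card_eq_rank K
  rw [Int.sign_eq_neg_one_of_neg hD] at hsign
  rw [hdeg] at hrank
  rw [← nrRealPlaces_eq_zero_iff]
  obtain h | h : nrComplexPlaces K = 0 ∨ nrComplexPlaces K = 1 := by omega
  · rw [h] at hsign; norm_num at hsign
  · omega

open scoped Classical in
theorem IsTotallyComplex.norm_eq_norm_mixedEmbedding_sq {K : Type*} [Field K]
    [NumberField K] [IsTotallyComplex K] (hdeg : Module.finrank ℚ K = 2) (x : K) :
    (Algebra.norm ℚ x : ℝ) = ‖mixedEmbedding K x‖ ^ 2 := by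
  obtain ⟨w, hw⟩ : ∃ w : InfinitePlace K, ∀ v, v = w := by
    refine Fintype.card_eq_one_iff.mp ?_
    have := IsTotallyComplex.finrank K
    rw [card_eq_nrRealPlaces_add_nrComplexPlaces, IsTotallyComplex.nrRealPlaces_eq_zero]
    omega
  have huniv : (Finset.univ : Finset (InfinitePlace K)) = {w} := by ext; simp [hw]
  have hnorm : ‖mixedEmbedding K x‖ = w x := by
    simp [mixedEmbedding.norm_eq_sup'_normAtPlace, huniv, mixedEmbedding.normAtPlace_apply]
  have hN : (0 : ℝ) ≤ Algebra.norm ℚ x := by exact_mod_cast IsTotallyComplex.norm_nonneg x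
  rw [hnorm, ← abs_of_nonneg hN, ← Rat.cast_abs, ← prod_eq_abs_norm, huniv, Finset.prod_singleton,
    IsTotallyComplex.mult_eq]

open scoped Classical in
theorem mixedEmbedding.summable_exp_neg_mul_norm_sq {K : Type*} [Field K]
    [NumberField K] {I : FractionalIdeal (𝓞 K)⁰ K} (hI : I ≠ 0) {c : ℝ} (hc : 0 < c) :
    Summable fun a : (I : Submodule (𝓞 K) K) => Real.exp (-c * ‖mixedEmbedding K a‖ ^ 2) := by
  let L := idealLattice K (Units.mk0 I hI)
  let ι : ↥(I : Submodule (𝓞 K) K) → L :=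
    fun a => ⟨mixedEmbedding K a, (mem_idealLattice K _).mpr ⟨a, a.2, rfl⟩⟩
  have hι : Function.Injective ι :=
    fun _ _ h => Subtype.ext (mixedEmbedding_injective K (congrArg Subtype.val h))
  exact ((ZLattice.summable_exp_neg_mul_norm_sq L hc).comp_injective hι :)

end NumberField

/-- Let `D < 0` be a fundamental discriminant, `k = ℚ(√D)`, and `𝔞` a nonzero
fractional ideal of `k`.  For every `τ` in the complex upper half-plane the family
`(e(N(a)τ/N(𝔞)))_{a ∈ 𝔞}` is summable, and the resulting function
`θ_𝔞(τ) = Σ_{a ∈ 𝔞} e(N(a)τ/N(𝔞))` is holomorphic on the upper half-plane. -/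
theorem idealTheta_summable_and_holomorphic
    (D : ℤ) (hDneg : D < 0)
    (k : Type) [Field k] [NumberField k]
    (hdeg : Module.finrank ℚ k = 2) (hdisc : NumberField.discr k = D)
    (𝔞 : FractionalIdeal (𝓞 k)⁰ k) (h𝔞 : 𝔞 ≠ 0) :
    (∀ τ : ℂ, 0 < τ.im →
      Summable fun a : (𝔞 : Submodule (𝓞 k) k) =>
        Complex.exp (2 * Real.pi * Complex.I *
          ((Algebra.norm ℚ (a : k) / FractionalIdeal.absNorm 𝔞 : ℚ) : ℂ) * τ)) ∧
    DifferentiableOn ℂ (idealTheta k 𝔞) {τ : ℂ | 0 < τ.im} := by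
  have := isTotallyComplex_of_finrank_eq_two_of_discr_neg hdeg (hdisc ▸ hDneg)
  set N𝔞 : ℚ := FractionalIdeal.absNorm 𝔞
  have hN𝔞 : (0 : ℝ) < N𝔞 := Rat.cast_pos.mpr <| (FractionalIdeal.absNorm_nonneg 𝔞).lt_of_ne
    fun h => h𝔞 (FractionalIdeal.absNorm_eq_zero_iff.mp h.symm)
  let r : ↥(𝔞 : Submodule (𝓞 k) k) → ℝ := fun a => ((Algebra.norm ℚ (a : k) / N𝔞 : ℚ) : ℝ)
  have hr₀ : ∀ a, 0 ≤ r a := fun a => Rat.cast_nonneg.mpr <|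
    div_nonneg (IsTotallyComplex.norm_nonneg _) (FractionalIdeal.absNorm_nonneg 𝔞)
  have hr : ∀ c > 0, Summable fun a => Real.exp (-c * r a) := fun c hc => by
    convert mixedEmbedding.summable_exp_neg_mul_norm_sq h𝔞 (div_pos hc hN𝔞) using 3 with a
    simp only [r, Rat.cast_div, IsTotallyComplex.norm_eq_norm_mixedEmbedding_sq hdeg]
    ring
  have hcast : ∀ a, ((r a : ℝ) : ℂ) = ((Algebra.norm ℚ (a : k) / N𝔞 : ℚ) : ℂ) :=
    fun a => Complex.ofReal_ratCast _
  refine ⟨fun τ hτ => ?_, ?_⟩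
  · simpa only [hcast] using summable_cexp_two_pi_I_mul_of_summable_exp_neg_mul hr hτ
  · have h := differentiableOn_tsum_cexp_two_pi_I_mul hr₀ hr
    simp only [hcast] at h
    exact h
end

section
/- Let D < 0 be a fundamental discriminant, k = ℚ(√D), and p an odd prime dividing D. Let 𝔞 be a nonzero fractional ideal of k and let λ, μ ∈ 𝔞 be nonzero elements such that the integers m = N(λ)/N(𝔞) and n = N(μ)/N(𝔞) are both coprime to D. Then the Legendre symbols of m and n modulo p agree: (m | p) = (n | p). (In other words, for each odd prime p ∣ D the genus character χ_{p*} takes a constant value on the numbers coprime to D represented by the quadratic form N(·)/N(𝔞) on 𝔞.) -/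
/-!
For `λ, μ ∈ 𝔞` the element `ξ = λ μ̄ / N(𝔞)` has trace `N(λ + μ)/N(𝔞) - m - n` and norm `m n`,
both integers, so `ξ` is an algebraic integer. The discriminant `Tr(ξ)² - 4 N(ξ)` of `(1, ξ)` is
then a square multiple of `D`, hence divisible by `p`, so `4 m n` is a nonzero square mod `p`
and `(m | p) (n | p) = 1`.
-/

open NumberField Polynomial
open scoped nonZeroDivisors

namespace Algebra

section RankTwo

variable {R S : Type*} [CommRing R] [Nontrivial R] [CommRing S] [Algebra R S]
  [Module.Free R S] [Module.Finite R S] (h : Module.finrank R S = 2)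
include h

theorem norm_one_add (x : S) : norm R (1 + x) = 1 + trace R S x + norm R x := by
  let b := Module.finBasisOfFinrankEq R S h
  rw [norm_eq_matrix_det b, norm_eq_matrix_det b, trace_eq_matrix_trace b, map_add, map_one,
    Matrix.det_fin_two, Matrix.det_fin_two, Matrix.trace_fin_two]
  simp only [Matrix.add_apply, Matrix.one_apply_eq, Matrix.one_apply_ne zero_ne_one,
    Matrix.one_apply_ne one_ne_zero]
  ring

theorem aeval_X_sq_sub_trace_add_norm (x : S) :
    aeval x (X ^ 2 - C (trace R S x) * X + C (norm R x)) = 0 := by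
  let b := Module.finBasisOfFinrankEq R S h
  have := aeval_self_charpoly_lmul (R := R) x
  rw [← LinearMap.charpoly_toMatrix _ b] at this
  change aeval x (leftMulMatrix b x).charpoly = 0 at this
  rwa [Matrix.charpoly_fin_two, ← trace_eq_matrix_trace, ← norm_eq_matrix_det] at this

theorem discr_one_self (x : S) : discr R ![1, x] = trace R S x ^ 2 - 4 * norm R x := by
  have hsq : x * x = trace R S x • x - algebraMap R S (norm R x) := by
    have := aeval_X_sq_sub_trace_add_norm h x
    simp only [map_add, map_sub, map_mul, map_pow, aeval_X, aeval_C] at this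
    rw [Algebra.smul_def]
    linear_combination this
  rw [discr_def, Matrix.det_fin_two]
  have htr1 : trace R S 1 = 2 := by
    rw [← map_one (algebraMap R S), trace_algebraMap, h, nsmul_eq_mul, Nat.cast_ofNat, mul_one]
  simp [traceMatrix_apply, traceForm_apply, hsq, trace_algebraMap, h, htr1]
  ring

end RankTwo

section QuadraticField

variable {K L : Type*} [Field K] [Field L] [Algebra K L] [FiniteDimensional K L]
  (h : Module.finrank K L = 2)
include h

theorem trace_norm_div_smul_div (lam mu : L) (hmu : mu ≠ 0) (c : K) :
    trace K L ((norm K mu / c) • (lam / mu)) =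
      (norm K (lam + mu) - norm K lam - norm K mu) / c := by
  obtain ⟨y, rfl⟩ : ∃ y, lam = mu * y := ⟨lam / mu, by field_simp⟩
  rw [mul_div_cancel_left₀ y hmu, map_smul, smul_eq_mul, show mu * y + mu = mu * (1 + y) by ring,
    map_mul, map_mul, norm_one_add h]
  ring

theorem norm_norm_div_smul_div (lam mu : L) (hmu : mu ≠ 0) (c : K) :
    norm K ((norm K mu / c) • (lam / mu)) = norm K lam / c * (norm K mu / c) := by
  obtain ⟨y, rfl⟩ : ∃ y, lam = mu * y := ⟨lam / mu, by field_simp⟩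
  rw [mul_div_cancel_left₀ y hmu, smul_def, map_mul, map_mul, Algebra.norm_algebraMap, h]
  ring

theorem isIntegral_of_trace_norm_eq_algebraMap {R : Type*} [CommRing R] [Algebra R K]
    [Algebra R L] [IsScalarTower R K L] {x : L} {t n : R}
    (ht : trace K L x = algebraMap R K t) (hn : norm K x = algebraMap R K n) : IsIntegral R x := by
  refine ⟨X ^ 2 - C t * X + C n, by monicity!, ?_⟩
  rw [← aeval_def, ← aeval_map_algebraMap K]
  simpa [ht, hn] using aeval_X_sq_sub_trace_add_norm h x

end QuadraticField

end Algebra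

namespace NumberField

variable {K : Type*} [Field K] [NumberField K]

theorem discr_dvd_algebraDiscr {ι : Type*} [Fintype ι] [DecidableEq ι]
    (b : Module.Basis ι ℤ (𝓞 K)) (v : ι → 𝓞 K) : discr K ∣ Algebra.discr ℤ v := by
  rw [← discr_eq_discr K b, ← b.toMatrix_map_vecMul v, Algebra.discr_of_matrix_vecMul]
  exact dvd_mul_left _ _

theorem discr_dvd_sq_sub_four_mul (h : Module.finrank ℚ K = 2) {x : K} {t n : ℤ}
    (ht : Algebra.trace ℚ K x = t) (hn : Algebra.norm ℚ x = n) : discr K ∣ t ^ 2 - 4 * n := by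
  have hx : IsIntegral ℤ x := Algebra.isIntegral_of_trace_norm_eq_algebraMap h ht hn
  have hrank : Module.finrank ℤ (𝓞 K) = 2 := (RingOfIntegers.rank K).trans h
  let y : 𝓞 K := ⟨x, hx⟩
  have hty : Algebra.trace ℤ (𝓞 K) y = t :=
    Int.cast_injective (by rw [Algebra.coe_trace_int]; exact ht)
  have hny : Algebra.norm ℤ y = n := Int.cast_injective (by rw [Algebra.coe_norm_int]; exact hn)
  rw [← hty, ← hny, ← Algebra.discr_one_self hrank]
  exact discr_dvd_algebraDiscr (Module.finBasisOfFinrankEq ℤ (𝓞 K) hrank) _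

theorem exists_intCast_eq_norm_div_absNorm {𝔞 : FractionalIdeal (𝓞 K)⁰ K} (h𝔞 : 𝔞 ≠ 0)
    {x : K} (hx : x ∈ 𝔞) :
    ∃ r : ℤ, (r : ℚ) = Algebra.norm ℚ x / FractionalIdeal.absNorm 𝔞 := by
  have hle : FractionalIdeal.spanSingleton (𝓞 K)⁰ x * 𝔞⁻¹ ≤ 1 := by
    calc FractionalIdeal.spanSingleton (𝓞 K)⁰ x * 𝔞⁻¹ ≤ 𝔞 * 𝔞⁻¹ := by
          gcongr; exact FractionalIdeal.spanSingleton_le_iff_mem.mpr hx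
      _ = 1 := mul_inv_cancel₀ h𝔞
  obtain ⟨I, hI⟩ := FractionalIdeal.le_one_iff_exists_coeIdeal.mp hle
  have habs : |Algebra.norm ℚ x / FractionalIdeal.absNorm 𝔞| = Ideal.absNorm I := by
    rw [abs_div, abs_of_nonneg (FractionalIdeal.absNorm_nonneg 𝔞), div_eq_mul_inv,
      ← FractionalIdeal.absNorm_span_singleton (𝓞 K), ← map_inv₀, ← map_mul, ← hI,
      FractionalIdeal.coeIdeal_absNorm]
  rcases (abs_eq (Nat.cast_nonneg _)).mp habs with hpos | hneg
  · exact ⟨Ideal.absNorm I, by rw [hpos]; rfl⟩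
  · exact ⟨-Ideal.absNorm I, by rw [hneg]; push_cast; rfl⟩

end NumberField

theorem legendreSym_eq_of_dvd_sq_sub_four_mul {p : ℕ} [Fact p.Prime] (hp : p ≠ 2) {m n t : ℤ}
    (hm : ¬ (p : ℤ) ∣ m) (hn : ¬ (p : ℤ) ∣ n) (h : (p : ℤ) ∣ t ^ 2 - 4 * (m * n)) :
    legendreSym p m = legendreSym p n := by
  have h2 : ((2 : ℤ) : ZMod p) ≠ 0 := by
    rw [Ne, ZMod.intCast_zmod_eq_zero_iff_dvd]
    exact_mod_cast fun h2 => hp ((Nat.prime_dvd_prime_iff_eq Fact.out Nat.prime_two).mp h2)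
  rw [← ZMod.intCast_zmod_eq_zero_iff_dvd] at hm hn h
  have hsq : ((t ^ 2 : ℤ) : ZMod p) = ((2 ^ 2 * (m * n) : ℤ) : ZMod p) := by
    push_cast at h ⊢; linear_combination h
  have ht : (t : ZMod p) ≠ 0 := by
    intro ht
    have h0 : ((2 ^ 2 * (m * n) : ℤ) : ZMod p) = 0 := by
      rw [← hsq, Int.cast_pow, ht, zero_pow two_ne_zero]
    rw [Int.cast_mul, Int.cast_pow, Int.cast_mul] at h0
    rcases mul_eq_zero.mp h0 with h0 | h0
    · exact h2 (pow_eq_zero_iff two_ne_zero |>.mp h0)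
    · exact (mul_eq_zero.mp h0).elim hm hn
  have hmn : legendreSym p m * legendreSym p n = 1 := calc
    _ = legendreSym p (2 ^ 2) * legendreSym p (m * n) := by
      rw [legendreSym.sq_one' p h2, one_mul, legendreSym.mul]
    _ = legendreSym p (t ^ 2) := by
      rw [← legendreSym.mul]; unfold legendreSym; rw [hsq]
    _ = 1 := legendreSym.sq_one' p ht
  linear_combination legendreSym p n * legendreSym.sq_one p hm - legendreSym p m * hmn

theorem genus_character_constant_on_represented_numbers_general
    (D : ℤ)
    (k : Type) [Field k] [NumberField k]
    (hdeg : Module.finrank ℚ k = 2) (hdisc : NumberField.discr k = D)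
    (p : ℕ) [Fact p.Prime] (hpodd : p ≠ 2) (hpD : (p : ℤ) ∣ D)
    (𝔞 : FractionalIdeal (𝓞 k)⁰ k) (h𝔞 : 𝔞 ≠ 0)
    (lam mu : k) (hlam𝔞 : lam ∈ 𝔞) (hmu𝔞 : mu ∈ 𝔞) (hmu : mu ≠ 0)
    (m n : ℤ)
    (hm : (m : ℚ) = Algebra.norm ℚ lam / FractionalIdeal.absNorm 𝔞)
    (hn : (n : ℚ) = Algebra.norm ℚ mu / FractionalIdeal.absNorm 𝔞)
    (hmD : IsCoprime m D) (hnD : IsCoprime n D) :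
    legendreSym p m = legendreSym p n := by
  obtain ⟨s, hs⟩ :=
    NumberField.exists_intCast_eq_norm_div_absNorm h𝔞 (Submodule.add_mem _ hlam𝔞 hmu𝔞)
  set c := FractionalIdeal.absNorm 𝔞
  -- `ξ = λ μ̄ / N(𝔞)`, written without the conjugation since `μ̄ = N(μ) / μ`
  set ξ := (Algebra.norm ℚ mu / c) • (lam / mu)
  have htr : Algebra.trace ℚ k ξ = ((s - m - n : ℤ) : ℚ) := by
    rw [Algebra.trace_norm_div_smul_div hdeg lam mu hmu, Int.cast_sub, Int.cast_sub, hs, hm, hn]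
    ring
  have hnorm : Algebra.norm ℚ ξ = ((m * n : ℤ) : ℚ) := by
    rw [Algebra.norm_norm_div_smul_div hdeg lam mu hmu, Int.cast_mul, hm, hn]
  have hD : D ∣ (s - m - n) ^ 2 - 4 * (m * n) :=
    hdisc ▸ NumberField.discr_dvd_sq_sub_four_mul hdeg htr hnorm
  have hp : Prime (p : ℤ) := Nat.prime_iff_prime_int.mp Fact.out
  exact legendreSym_eq_of_dvd_sq_sub_four_mul hpodd
    (fun hpm => hp.not_isUnit (hmD.isUnit_of_dvd' hpm hpD))
    (fun hpn => hp.not_isUnit (hnD.isUnit_of_dvd' hpn hpD)) (hpD.trans hD)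

/-- Let `D < 0` be a fundamental discriminant, `k = ℚ(√D)`, and `p` an odd
prime dividing `D`.  Let `𝔞` be a nonzero fractional ideal of `k` and `λ, μ ∈ 𝔞` nonzero
elements such that the integers `m = N(λ)/N(𝔞)` and `n = N(μ)/N(𝔞)` are coprime to `D`.
Then the Legendre symbols of `m` and `n` modulo `p` agree: `(m | p) = (n | p)`. -/
theorem genus_character_constant_on_represented_numbers
    (D : ℤ) (hDneg : D < 0)
    (k : Type) [Field k] [NumberField k]
    (hdeg : Module.finrank ℚ k = 2) (hdisc : NumberField.discr k = D)
    (p : ℕ) [Fact p.Prime] (hpodd : p ≠ 2) (hpD : (p : ℤ) ∣ D)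
    (𝔞 : FractionalIdeal (𝓞 k)⁰ k) (h𝔞 : 𝔞 ≠ 0)
    (lam mu : k) (hlam𝔞 : lam ∈ 𝔞) (hmu𝔞 : mu ∈ 𝔞) (hlam : lam ≠ 0) (hmu : mu ≠ 0)
    (m n : ℤ)
    (hm : (m : ℚ) = Algebra.norm ℚ lam / FractionalIdeal.absNorm 𝔞)
    (hn : (n : ℚ) = Algebra.norm ℚ mu / FractionalIdeal.absNorm 𝔞)
    (hmD : IsCoprime m D) (hnD : IsCoprime n D) :
    legendreSym p m = legendreSym p n :=
  genus_character_constant_on_represented_numbers_general D k hdeg hdisc p hpodd hpD 𝔞 h𝔞 lam mu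
    hlam𝔞 hmu𝔞 hmu m n hm hn hmD hnD
end

section
/- Let Q be the quadratic form on the ℚ-vector space V = M₂(ℚ) of 2×2 rational matrices given by Q(X) = −det(X). Then the even Clifford algebra of Q is isomorphic as a ℚ-algebra to the product M₂(ℚ) × M₂(ℚ). -/
/-!
The even Clifford algebra maps to `M₂ × M₂` by `ι x * ι y ↦ -(x * adj y, adj x * y)`; this
respects the Clifford relations because `x * adj x = adj x * x = det x • 1`. The image contains
every pair `(x, adj x)`, and these generate `M₂ × M₂` as an algebra, so the map is onto. Both
sides have dimension 8: `Cl(Q)` has dimension `2 ^ 4`, and left multiplication by an anisotropic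
vector exchanges its even and odd parts. Hence the surjection is an isomorphism.
-/

open Module CliffordAlgebra Matrix

namespace ExteriorAlgebra

variable {R M : Type*} [CommRing R] [StrongRankCondition R] [AddCommGroup M] [Module R M]
  [Module.Free R M] [Module.Finite R M]

instance : Module.Finite R (ExteriorAlgebra R M) :=
  Module.Finite.of_basis (Module.finBasis R M).ExteriorAlgebra

theorem finrank_eq : finrank R (ExteriorAlgebra R M) = 2 ^ finrank R M := by
  rw [finrank_eq_card_basis (Module.finBasis R M).ExteriorAlgebra, Fintype.card_finset,
    Fintype.card_fin]

end ExteriorAlgebra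

namespace CliffordAlgebra

section Dimension

variable {R M : Type*} [CommRing R] [StrongRankCondition R] [AddCommGroup M] [Module R M]
  [Module.Free R M] [Module.Finite R M] [Invertible (2 : R)] (Q : QuadraticForm R M)

instance : Module.Finite R (CliffordAlgebra Q) :=
  Module.Finite.equiv (equivExterior Q).symm

theorem finrank_eq : finrank R (CliffordAlgebra Q) = 2 ^ finrank R M :=
  (equivExterior Q).finrank_eq.trans ExteriorAlgebra.finrank_eq

end Dimension

section EvenOdd

variable {R M : Type*} [CommRing R] [AddCommGroup M] [Module R M] (Q : QuadraticForm R M)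

theorem invOf_ι_mem_evenOdd_one (v : M) [Invertible (Q v)] [Invertible (ι Q v)] :
    ⅟(ι Q v) ∈ evenOdd Q 1 := by
  rw [invOf_ι]
  exact ι_mem_evenOdd_one Q _

def evenOddZeroEquivOne (v : M) [Invertible (Q v)] : evenOdd Q 0 ≃ₗ[R] evenOdd Q 1 :=
  letI := invertibleιOfInvertible Q v
  LinearEquiv.ofLinearMap
    (f := (LinearMap.mulLeft R (ι Q v)).restrict fun _ hx =>
      show _ ∈ evenOdd Q (1 + 0) from SetLike.mul_mem_graded (ι_mem_evenOdd_one Q v) hx)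
    (g := (LinearMap.mulLeft R (⅟(ι Q v))).restrict fun _ hx =>
      have h : _ ∈ evenOdd Q (1 + 1) :=
        SetLike.mul_mem_graded (invOf_ι_mem_evenOdd_one Q v) hx
      h)
    (LinearMap.ext fun _ => Subtype.ext (mul_invOf_cancel_left (ι Q v) _))
    (LinearMap.ext fun _ => Subtype.ext (invOf_mul_cancel_left (ι Q v) _))

end EvenOdd

theorem two_mul_finrank_even {K V : Type*} [Field K] [Invertible (2 : K)] [AddCommGroup V]
    [Module K V] [FiniteDimensional K V] (Q : QuadraticForm K V) {v : V} (hv : Q v ≠ 0) :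
    2 * finrank K (even Q) = 2 ^ finrank K V := by
  let := invertibleOfNonzero hv
  rw [← CliffordAlgebra.finrank_eq Q, ← Submodule.finrank_add_eq_of_isCompl (evenOdd_isCompl Q),
    ← (evenOddZeroEquivOne Q v).finrank_eq, two_mul]
  rfl

end CliffordAlgebra

namespace Matrix

variable {R : Type*} [CommRing R]

def adjugatePair :
    Matrix (Fin 2) (Fin 2) R →ₗ[R] Matrix (Fin 2) (Fin 2) R × Matrix (Fin 2) (Fin 2) R where
  toFun x := (x, adjugate x)
  map_add' x y := by
    ext i j <;> fin_cases i <;> fin_cases j <;> simp [adjugate_fin_two] <;> abel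
  map_smul' r x := by
    ext i j <;> fin_cases i <;> fin_cases j <;> simp [adjugate_fin_two]

@[simp]
theorem adjugatePair_apply (x : Matrix (Fin 2) (Fin 2) R) :
    adjugatePair x = (x, adjugate x) :=
  rfl

theorem adjugatePair_mul_swap (x : Matrix (Fin 2) (Fin 2) R) :
    adjugatePair x * (adjugatePair x).swap = x.det • 1 := by
  simp only [adjugatePair_apply, Prod.swap_prod_mk, Prod.mk_mul_mk, mul_adjugate, adjugate_mul]
  rfl

theorem swap_mul_adjugatePair (x : Matrix (Fin 2) (Fin 2) R) :
    (adjugatePair x).swap * adjugatePair x = x.det • 1 := by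
  simp only [adjugatePair_apply, Prod.swap_prod_mk, Prod.mk_mul_mk, mul_adjugate, adjugate_mul]
  rfl

theorem swap_adjugatePair (x : Matrix (Fin 2) (Fin 2) R) :
    (adjugatePair x).swap = adjugatePair (adjugate x) := by
  simp [adjugate_adjugate']

theorem adjoin_range_adjugatePair : Algebra.adjoin R (Set.range (adjugatePair (R := R))) = ⊤ := by
  set S := Algebra.adjoin R (Set.range (adjugatePair (R := R)))
  have mem x : adjugatePair x ∈ S := Algebra.subset_adjoin ⟨x, rfl⟩
  have e₁₂ : ((!![0, 1; 0, 0], 0) : Matrix (Fin 2) (Fin 2) R × Matrix (Fin 2) (Fin 2) R) =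
      adjugatePair !![1, 0; 0, 0] * adjugatePair !![0, 1; 0, 0] := by
    simp [adjugate_fin_two, ← zero_empty, cons_zero_zero]
  have e₂₁ : ((!![0, 0; 1, 0], 0) : Matrix (Fin 2) (Fin 2) R × Matrix (Fin 2) (Fin 2) R) =
      adjugatePair !![0, 0; 1, 0] * adjugatePair !![1, 0; 0, 0] := by
    simp [adjugate_fin_two, ← zero_empty, cons_zero_zero]
  have e₁₀ : ((1, 0) : Matrix (Fin 2) (Fin 2) R × Matrix (Fin 2) (Fin 2) R) =
      (!![0, 1; 0, 0], 0) * (!![0, 0; 1, 0], 0) + (!![0, 0; 1, 0], 0) * (!![0, 1; 0, 0], 0) := by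
    simp [one_fin_two]
  have h₁₀ : ((1, 0) : Matrix (Fin 2) (Fin 2) R × Matrix (Fin 2) (Fin 2) R) ∈ S := by
    rw [e₁₀, e₁₂, e₂₁]
    exact add_mem (mul_mem (mul_mem (mem _) (mem _)) (mul_mem (mem _) (mem _)))
      (mul_mem (mul_mem (mem _) (mem _)) (mul_mem (mem _) (mem _)))
  rw [eq_top_iff]
  rintro ⟨x, y⟩ -
  have e : (x, y) = (1, 0) * adjugatePair x + (1 - (1, 0)) * (adjugatePair y).swap :=
    Prod.ext (by simp) (by simp)
  rw [e, swap_adjugatePair]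
  exact add_mem (mul_mem h₁₀ (mem x)) (mul_mem (sub_mem (one_mem S) h₁₀) (mem _))

end Matrix

section NegDet

variable {R : Type*} [CommRing R] (Q : QuadraticForm R (Matrix (Fin 2) (Fin 2) R))
  (hQ : ∀ X, Q X = -X.det)

def negDetEvenHom : EvenHom Q (Matrix (Fin 2) (Fin 2) R × Matrix (Fin 2) (Fin 2) R) where
  bilin := -(LinearMap.mul R _).compl₁₂ adjugatePair
    ((LinearEquiv.prodComm R _ _).toLinearMap ∘ₗ adjugatePair)
  contract m := by
    simp only [LinearMap.neg_apply, LinearMap.compl₁₂_apply, LinearMap.mul_apply',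
      LinearMap.comp_apply, LinearEquiv.coe_coe, LinearEquiv.prodComm_apply,
      adjugatePair_mul_swap, hQ, Algebra.algebraMap_eq_smul_one, neg_smul]
  contract_mid m₁ m₂ m₃ := by
    simp only [LinearMap.neg_apply, LinearMap.compl₁₂_apply, LinearMap.mul_apply',
      LinearMap.comp_apply, LinearEquiv.coe_coe, LinearEquiv.prodComm_apply, hQ, neg_mul_neg]
    rw [mul_assoc, ← mul_assoc _ (adjugatePair m₂), swap_mul_adjugatePair]
    simp

theorem even_lift_negDetEvenHom_surjective :
    Function.Surjective (even.lift Q (negDetEvenHom Q hQ)) := by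
  rw [← AlgHom.range_eq_top, eq_top_iff, ← adjoin_range_adjugatePair, Algebra.adjoin_le_iff]
  rintro _ ⟨x, rfl⟩
  refine (AlgHom.mem_range _).mpr ⟨-(even.ι Q).bilin x 1, ?_⟩
  rw [map_neg, even.lift_ι]
  simp [negDetEvenHom]

end NegDet

noncomputable def negDetEvenEquiv {K : Type*} [Field K] [Invertible (2 : K)]
    (Q : QuadraticForm K (Matrix (Fin 2) (Fin 2) K)) (hQ : ∀ X, Q X = -X.det) :
    even Q ≃ₐ[K] Matrix (Fin 2) (Fin 2) K × Matrix (Fin 2) (Fin 2) K :=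
  have hdim : finrank K (even Q) =
      finrank K (Matrix (Fin 2) (Fin 2) K × Matrix (Fin 2) (Fin 2) K) := by
    have := two_mul_finrank_even Q (v := 1) (by simp [hQ])
    simp only [finrank_prod, finrank_matrix, finrank_self, Fintype.card_fin] at this ⊢
    omega
  have hsurj := even_lift_negDetEvenHom_surjective Q hQ
  AlgEquiv.ofBijective _
    ⟨(LinearMap.injective_iff_surjective_of_finrank_eq_finrank hdim).mpr hsurj, hsurj⟩

/-- Let `Q` be the quadratic form on `V = M₂(ℚ)` given by `Q(X) = −det(X)`.
Then the even Clifford algebra of `Q` is isomorphic as a ℚ-algebra to `M₂(ℚ) × M₂(ℚ)`. -/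
theorem even_clifford_of_neg_det_iso_prod
    (Q : QuadraticForm ℚ (Matrix (Fin 2) (Fin 2) ℚ))
    (hQ : ∀ X : Matrix (Fin 2) (Fin 2) ℚ, Q X = -X.det) :
    Nonempty (CliffordAlgebra.even Q ≃ₐ[ℚ]
      (Matrix (Fin 2) (Fin 2) ℚ × Matrix (Fin 2) (Fin 2) ℚ)) :=
  ⟨negDetEvenEquiv Q hQ⟩
end

section
/- Let A, B, C ∈ ℤ with A > 0 and B² − 4AC = D, where D < 0 is a fundamental discriminant, and let k = ℚ(√D). On M₂(ℤ) consider the quadratic form Q(X) = −det(X) with associated bilinear form (X, Y) = −tr(X·adj(Y)), where adj denotes the adjugate. Set f₁ = [[−1, −B], [0, A]], f₂ = [[0, −C], [−1, 0]], g₁ = [[1, 0], [0, A]], g₂ = [[0, −C], [1, B]] in M₂(ℤ). Then: (i) for all x, y ∈ ℤ, −det(x·f₁ + y·f₂) = Ax² + Bxy + Cy² = N(xA + y(B+√D)/2)/A, so that A ↦ f₁, (B+√D)/2 ↦ f₂ defines an isometry from the lattice (ℤA + ℤ(B+√D)/2, N(·)/A) onto ℤf₁ + ℤf₂; (ii) for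 all x, y ∈ ℤ, −det(x·g₁ + y·g₂) = −(Ax² + Bxy + Cy²); (iii) (fᵢ, gⱼ) = 0 for all i, j ∈ {1, 2}; (iv) every X ∈ M₂(ℤ) lying in the ℚ-linear span of {f₁, f₂} lies in ℤf₁ + ℤf₂, and every X ∈ M₂(ℤ) lying in the ℚ-linear span of {g₁, g₂} lies in ℤg₁ + ℤg₂. -/
open NumberField
open scoped nonZeroDivisors

lemma norm_quad (D : ℤ) (hDneg : D < 0)
    (k : Type) [Field k] [NumberField k]
    (hdeg : Module.finrank ℚ k = 2)
    (s : k) (hs : s ^ 2 = (D : k)) (a b : ℚ) :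
    Algebra.norm ℚ (algebraMap ℚ k a + algebraMap ℚ k b * s) = a ^ 2 - D * b ^ 2 := by
  have hDQ : (D : ℚ) < 0 := by exact_mod_cast hDneg
  have hinj : Function.Injective (algebraMap ℚ k) := (algebraMap ℚ k).injective
  have hsnotrat : ∀ q : ℚ, algebraMap ℚ k q ≠ s := by
    intro q hq
    have h1 : algebraMap ℚ k (q ^ 2) = algebraMap ℚ k (D : ℚ) := by
      rw [map_pow, hq, hs]; simp
    have h2 : q ^ 2 = (D : ℚ) := hinj h1
    nlinarith [sq_nonneg q]
  have li : LinearIndependent ℚ ![1, s] := by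
    rw [LinearIndependent.pair_iff]
    intro p q h
    have hk : algebraMap ℚ k p + algebraMap ℚ k q * s = 0 := by
      simpa [Algebra.smul_def] using h
    by_cases hq : q = 0
    · subst hq
      simp only [map_zero, zero_mul, add_zero] at hk
      exact ⟨hinj (by simpa using hk), rfl⟩
    · exfalso
      apply hsnotrat (-p / q)
      have hqk : algebraMap ℚ k q ≠ 0 := fun hh => hq (hinj (by simpa using hh))
      rw [map_div₀, map_neg, eq_comm, eq_div_iff hqk]
      linear_combination hk
  have hcard : Fintype.card (Fin 2) = Module.finrank ℚ k := by simp [hdeg]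
  let bk := basisOfLinearIndependentOfCardEqFinrank li hcard
  have hb0 : bk 0 = 1 := by simp [bk, coe_basisOfLinearIndependentOfCardEqFinrank]
  have hb1 : bk 1 = s := by simp [bk, coe_basisOfLinearIndependentOfCardEqFinrank]
  set z := algebraMap ℚ k a + algebraMap ℚ k b * s with hz
  rw [Algebra.norm_eq_matrix_det bk, Matrix.det_fin_two]
  have key : ∀ (c d : ℚ) (j : Fin 2), bk.repr (c • bk 0 + d • bk 1) j = ![c, d] j := by
    intro c d j
    fin_cases j <;> simp [map_add, map_smul, Module.Basis.repr_self]
  have e0 : z * bk 0 = a • bk 0 + b • bk 1 := by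
    rw [hb0, hb1]; simp [hz, Algebra.smul_def]
  have e1 : z * bk 1 = (b * (D:ℚ)) • bk 0 + a • bk 1 := by
    rw [hb0, hb1]
    have h2 : algebraMap ℚ k b * s ^ 2 = algebraMap ℚ k (b * (D:ℚ)) := by
      rw [hs, map_mul]; norm_num
    simp only [hz, Algebra.smul_def, mul_one]
    linear_combination h2
  have m00 : Algebra.leftMulMatrix bk z 0 0 = a := by
    rw [Algebra.leftMulMatrix_eq_repr_mul, e0, key]; rfl
  have m10 : Algebra.leftMulMatrix bk z 1 0 = b := by
    rw [Algebra.leftMulMatrix_eq_repr_mul, e0, key]; rfl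
  have m01 : Algebra.leftMulMatrix bk z 0 1 = b * (D:ℚ) := by
    rw [Algebra.leftMulMatrix_eq_repr_mul, e1, key]; rfl
  have m11 : Algebra.leftMulMatrix bk z 1 1 = a := by
    rw [Algebra.leftMulMatrix_eq_repr_mul, e1, key]; rfl
  rw [m00, m01, m10, m11]; ring


/-- Let `A, B, C ∈ ℤ` with `A > 0` and `B² − 4AC = D`, `D < 0` a fundamental
discriminant, `k = ℚ(√D)` (with `s = √D ∈ k`, `s² = D`).  On `M₂(ℤ)` consider the quadratic
form `Q(X) = −det X` with bilinear form `(X,Y) = −tr(X·adj(Y))`.  With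
`f₁ = [[−1,−B],[0,A]]`, `f₂ = [[0,−C],[−1,0]]`, `g₁ = [[1,0],[0,A]]`, `g₂ = [[0,−C],[1,B]]`:
(i) `−det(x f₁ + y f₂) = Ax² + Bxy + Cy² = N(xA + y(B+√D)/2)/A`;
(ii) `−det(x g₁ + y g₂) = −(Ax² + Bxy + Cy²)`;
(iii) `(fᵢ, gⱼ) = 0` for all `i, j`;
(iv) every integer matrix in the ℚ-span of `{f₁, f₂}` lies in `ℤf₁ + ℤf₂`, and every integer
matrix in the ℚ-span of `{g₁, g₂}` lies in `ℤg₁ + ℤg₂`. -/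
theorem embedding_of_binary_lattice_in_M2Z
    (D : ℤ) (hDneg : D < 0)
    (k : Type) [Field k] [NumberField k]
    (hdeg : Module.finrank ℚ k = 2) (hdisc : NumberField.discr k = D)
    (s : k) (hs : s ^ 2 = (D : k))
    (A B C : ℤ) (hA : 0 < A) (hABC : B ^ 2 - 4 * A * C = D)
    (f₁ f₂ g₁ g₂ : Matrix (Fin 2) (Fin 2) ℤ)
    (hf₁ : f₁ = !![-1, -B; 0, A]) (hf₂ : f₂ = !![0, -C; -1, 0])
    (hg₁ : g₁ = !![1, 0; 0, A]) (hg₂ : g₂ = !![0, -C; 1, B]) :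
    (∀ x y : ℤ,
      -(x • f₁ + y • f₂).det = A * x ^ 2 + B * x * y + C * y ^ 2 ∧
      ((A * x ^ 2 + B * x * y + C * y ^ 2 : ℤ) : ℚ)
        = Algebra.norm ℚ ((x : k) * (A : k) + (y : k) * (((B : k) + s) / 2)) / (A : ℚ)) ∧
    (∀ x y : ℤ,
      -(x • g₁ + y • g₂).det = -(A * x ^ 2 + B * x * y + C * y ^ 2)) ∧
    (-(f₁ * g₁.adjugate).trace = 0 ∧ -(f₁ * g₂.adjugate).trace = 0 ∧
      -(f₂ * g₁.adjugate).trace = 0 ∧ -(f₂ * g₂.adjugate).trace = 0) ∧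
    (∀ X : Matrix (Fin 2) (Fin 2) ℤ,
      (∃ q r : ℚ, X.map (Int.cast : ℤ → ℚ)
          = q • f₁.map (Int.cast : ℤ → ℚ) + r • f₂.map (Int.cast : ℤ → ℚ)) →
      ∃ m n : ℤ, X = m • f₁ + n • f₂) ∧
    (∀ X : Matrix (Fin 2) (Fin 2) ℤ,
      (∃ q r : ℚ, X.map (Int.cast : ℤ → ℚ)
          = q • g₁.map (Int.cast : ℤ → ℚ) + r • g₂.map (Int.cast : ℤ → ℚ)) →
      ∃ m n : ℤ, X = m • g₁ + n • g₂) := by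
  subst hf₁ hf₂ hg₁ hg₂
  have hAQ : (A : ℚ) ≠ 0 := by positivity
  have hABC' : (B : ℚ) ^ 2 - 4 * A * C = (D : ℚ) := by exact_mod_cast hABC
  refine ⟨?_, ?_, ?_, ?_, ?_⟩
  · intro x y
    constructor
    · simp [Matrix.det_fin_two, Matrix.add_apply, Matrix.smul_apply]; ring
    · have hz : (x : k) * (A : k) + (y : k) * (((B : k) + s) / 2)
          = algebraMap ℚ k ((x * A + y * B / 2 : ℚ)) + algebraMap ℚ k ((y / 2 : ℚ)) * s := by
        rw [eq_ratCast, eq_ratCast]; push_cast; ring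
      rw [hz, norm_quad D hDneg k hdeg s hs]
      rw [eq_div_iff hAQ]
      push_cast
      linear_combination (-(y:ℚ)^2/4) * hABC'
  · intro x y
    simp [Matrix.det_fin_two, Matrix.add_apply, Matrix.smul_apply]; ring
  · refine ⟨?_, ?_, ?_, ?_⟩ <;>
      simp [Matrix.adjugate_fin_two_of, Matrix.mul_fin_two, Matrix.trace_fin_two_of] <;> ring
  · rintro X ⟨q, r, h⟩
    have h00 := congrFun (congrFun h 0) 0
    have h01 := congrFun (congrFun h 0) 1
    have h10 := congrFun (congrFun h 1) 0
    have h11 := congrFun (congrFun h 1) 1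
    simp [Matrix.map_apply, Matrix.add_apply, Matrix.smul_apply] at h00 h01 h10 h11
    have hq : q = -((X 0 0 : ℤ) : ℚ) := by linarith
    have hr : r = -((X 1 0 : ℤ) : ℚ) := by linarith
    simp only [hq, hr] at h01 h11
    refine ⟨-X 0 0, -X 1 0, ?_⟩
    ext i j
    fin_cases i <;> fin_cases j <;>
      simp [Matrix.add_apply, Matrix.smul_apply]
    · have h2 : ((X 0 1 : ℤ) : ℚ) = ((X 0 0 * B + X 1 0 * C : ℤ) : ℚ) := by
        push_cast; linarith [h01]
      exact_mod_cast h2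
    · have h2 : ((X 1 1 : ℤ) : ℚ) = ((-(X 0 0 * A) : ℤ) : ℚ) := by
        push_cast; linarith [h11]
      exact_mod_cast h2
  · rintro X ⟨q, r, h⟩
    have h00 := congrFun (congrFun h 0) 0
    have h01 := congrFun (congrFun h 0) 1
    have h10 := congrFun (congrFun h 1) 0
    have h11 := congrFun (congrFun h 1) 1
    simp [Matrix.map_apply, Matrix.add_apply, Matrix.smul_apply] at h00 h01 h10 h11
    have hq : q = ((X 0 0 : ℤ) : ℚ) := by linarith
    have hr : r = ((X 1 0 : ℤ) : ℚ) := by linarith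
    simp only [hq, hr] at h01 h11
    refine ⟨X 0 0, X 1 0, ?_⟩
    ext i j
    fin_cases i <;> fin_cases j <;>
      simp [Matrix.add_apply, Matrix.smul_apply]
    · have h2 : ((X 0 1 : ℤ) : ℚ) = ((-(X 1 0 * C) : ℤ) : ℚ) := by
        push_cast; linarith [h01]
      exact_mod_cast h2
    · have h2 : ((X 1 1 : ℤ) : ℚ) = ((X 0 0 * A + X 1 0 * B : ℤ) : ℚ) := by
        push_cast; linarith [h11]
      exact_mod_cast h2
end
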